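/- Let v1 and v2 be mutually redundant views for y, i.e., I(y; v1 | v2) = 0 and I(y; v2 | v1) = 0. Let z1 satisfy I(y; z1 | v1, v2) = 0 and be sufficient for v2, i.e., I(v1; v2 | z1) = 0. Then I(y; z1) = I(y; (v1, v2)). -/

import Mathlib

open scoped BigOperators

/-- Conditional mutual information I(X;Y|Z) for a finite probability space
given by a pmf `p` on `Ω`. -/
noncomputable def condMI {Ω A B C : Type} [Fintype Ω] [Fintype A] [Fintype B] [Fintype C]
    [DecidableEq A] [DecidableEq B] [DecidableEq C]
    (p : Ω → ℝ) (X : Ω → A) (Y : Ω → B) (Z : Ω → C) : ℝ :=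
  ∑ a : A, ∑ b : B, ∑ c : C,
    (∑ ω : Ω, if X ω = a ∧ Y ω = b ∧ Z ω = c then p ω else 0) *
      Real.log
        ((∑ ω : Ω, if X ω = a ∧ Y ω = b ∧ Z ω = c then p ω else 0) *
            (∑ ω : Ω, if Z ω = c then p ω else 0) /
          ((∑ ω : Ω, if X ω = a ∧ Z ω = c then p ω else 0) *
            (∑ ω : Ω, if Y ω = b ∧ Z ω = c then p ω else 0)))

/-- Mutual information I(X;Y) as conditional mutual information given a constant. -/
noncomputable def mi {Ω A B : Type} [Fintype Ω] [Fintype A] [Fintype B]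
    [DecidableEq A] [DecidableEq B] (p : Ω → ℝ) (X : Ω → A) (Y : Ω → B) : ℝ :=
  condMI p X Y (fun _ => ())

/-!
Write `I(X;Y|Z) = ∑ ω, p ω * log (P(x,y,z) P(z) / (P(x,z) P(y,z)))`, the probabilities being
those of the cells of `X, Y, Z` containing `ω`. In this form the chain rule
`I(X;(Y,Z)|W) = I(X;Z|W) + I(X;Y|Z,W)` is an identity between logarithms at every `ω` of positive
weight, and Gibbs' inequality gives `I ≥ 0`; so `I(X;(Y,Z)|W) = 0` iff both summands vanish.
Applying this: redundancy and `I(y;z1|v1,v2) = 0` give `I(y;v1|z1,v2) = 0` and `I(y;v2|z1,v1) = 0`;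
with sufficiency the first gives `I(v1;y|z1) = 0`, and then `I(y;(v1,v2)|z1) = 0`. Expanding
`I(y;(z1,(v1,v2)))` by the chain rule in both orders yields `I(y;z1) = I(y;(v1,v2))`.
-/

open Finset Real

lemma sub_le_mul_log_div {a b : ℝ} (ha : 0 ≤ a) (hb : 0 ≤ b) (hab : b = 0 → a = 0) :
    a - b ≤ a * log (a / b) := by
  rcases hb.eq_or_lt with rfl | hb
  · simp [hab rfl]
  · calc a - b = b * (a / b - 1) := by field_simp
      _ ≤ b * (a / b * log (a / b)) :=
        mul_le_mul_of_nonneg_left (self_sub_one_le_mul_log (div_nonneg ha hb.le)) hb.le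
      _ = a * log (a / b) := by field_simp

lemma sum_mul_log_div_nonneg {ι : Type} [Fintype ι] {f g : ι → ℝ} (hf : ∀ i, 0 ≤ f i)
    (hg : ∀ i, 0 ≤ g i) (hfg : ∀ i, g i = 0 → f i = 0) (hsum : ∑ i, g i ≤ ∑ i, f i) :
    0 ≤ ∑ i, f i * log (f i / g i) :=
  calc 0 ≤ ∑ i, (f i - g i) := by rw [sum_sub_distrib]; linarith
    _ ≤ _ := sum_le_sum fun i _ => sub_le_mul_log_div (hf i) (hg i) (hfg i)

section Mass

variable {Ω : Type} [Fintype Ω] (p : Ω → ℝ)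

noncomputable def mass (s : Set Ω) : ℝ := ∑ ω, s.indicator p ω

variable {p}

lemma mass_mono (hp : ∀ ω, 0 ≤ p ω) {s t : Set Ω} (h : s ⊆ t) : mass p s ≤ mass p t :=
  sum_le_sum fun ω _ => Set.indicator_le_indicator_of_subset h hp ω

lemma mass_nonneg (hp : ∀ ω, 0 ≤ p ω) (s : Set Ω) : 0 ≤ mass p s :=
  sum_nonneg fun ω _ => Set.indicator_nonneg (fun ω _ => hp ω) ω

lemma le_mass_of_mem (hp : ∀ ω, 0 ≤ p ω) {s : Set Ω} {ω : Ω} (hω : ω ∈ s) :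
    p ω ≤ mass p s :=
  calc p ω = s.indicator p ω := (Set.indicator_of_mem hω p).symm
    _ ≤ mass p s := single_le_sum (fun ω _ => Set.indicator_nonneg (fun ω _ => hp ω) ω)
        (mem_univ ω)

variable (p)

lemma sum_mass_preimage_inter {A : Type} [Fintype A] (X : Ω → A) (s : Set Ω) :
    ∑ a, mass p (X ⁻¹' {a} ∩ s) = mass p s := by
  classical
  simp only [mass, Set.indicator_apply, Set.mem_inter_iff, Set.mem_preimage,
    Set.mem_singleton_iff]
  rw [sum_comm]
  refine sum_congr rfl fun ω _ => ?_
  simp [ite_and]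

lemma sum_mass_preimage_mul {A : Type} [Fintype A] (X : Ω → A) (f : A → ℝ) :
    ∑ a, mass p (X ⁻¹' {a}) * f a = ∑ ω, p ω * f (X ω) := by
  classical
  simp only [mass, Set.indicator_apply, Set.mem_preimage, Set.mem_singleton_iff, sum_mul]
  rw [sum_comm]
  refine sum_congr rfl fun ω _ => ?_
  simp

end Mass

lemma preimage_pair_singleton {Ω A B : Type} (X : Ω → A) (Y : Ω → B) (a : A) (b : B) :
    (fun ω => (X ω, Y ω)) ⁻¹' {(a, b)} = X ⁻¹' {a} ∩ Y ⁻¹' {b} := by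
  rw [← Set.singleton_prod_singleton, Set.mk_preimage_prod]

section PointwiseInformation

variable {Ω : Type} [Fintype Ω] (p : Ω → ℝ)

noncomputable def condPMI (s t u : Set Ω) : ℝ :=
  log (mass p (s ∩ t ∩ u) * mass p u / (mass p (s ∩ u) * mass p (t ∩ u)))

lemma condPMI_comm (s t u : Set Ω) : condPMI p s t u = condPMI p t s u := by
  rw [condPMI, condPMI, Set.inter_comm s t, mul_comm (mass p (s ∩ u))]

variable {p}

lemma condPMI_eq_of_pos (hp : ∀ ω, 0 ≤ p ω) {s t u : Set Ω} {ω : Ω} (hω : ω ∈ s ∩ t ∩ u)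
    (hpω : 0 < p ω) :
    condPMI p s t u = log (mass p (s ∩ t ∩ u)) + log (mass p u)
      - log (mass p (s ∩ u)) - log (mass p (t ∩ u)) := by
  obtain ⟨⟨hs, ht⟩, hu⟩ := hω
  have pos : ∀ {r : Set Ω}, ω ∈ r → mass p r ≠ 0 := fun h =>
    (hpω.trans_le (le_mass_of_mem hp h)).ne'
  have hstu := pos (r := s ∩ t ∩ u) ⟨⟨hs, ht⟩, hu⟩
  have hsu := pos (Set.mem_inter hs hu)
  have htu := pos (Set.mem_inter ht hu)
  rw [condPMI, log_div (mul_ne_zero hstu (pos hu)) (mul_ne_zero hsu htu), log_mul hstu (pos hu),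
    log_mul hsu htu]
  ring

lemma condPMI_inter_mid (hp : ∀ ω, 0 ≤ p ω) {s t u v : Set Ω} {ω : Ω}
    (hω : ω ∈ s ∩ t ∩ u ∩ v) (hpω : 0 < p ω) :
    condPMI p s (t ∩ u) v = condPMI p s u v + condPMI p s t (u ∩ v) := by
  obtain ⟨⟨⟨hs, ht⟩, hu⟩, hv⟩ := hω
  rw [condPMI_eq_of_pos hp (t := t ∩ u) ⟨⟨hs, ht, hu⟩, hv⟩ hpω,
    condPMI_eq_of_pos hp (t := u) ⟨⟨hs, hu⟩, hv⟩ hpω,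
    condPMI_eq_of_pos hp (u := u ∩ v) ⟨⟨hs, ht⟩, hu, hv⟩ hpω, Set.inter_assoc s (t ∩ u) v,
    Set.inter_assoc s t (u ∩ v), Set.inter_assoc t u v, Set.inter_assoc s u v]
  ring

-- `I(X;Y|Z = c)` up to the factor `P(Z = c)`, for `u = Z⁻¹{c}`: Gibbs' inequality against the
-- weights `P(X = a, u) P(Y = b, u) / P(u)`, which have the same total mass `P(u)`.
lemma sum_mass_mul_condPMI_nonneg (hp : ∀ ω, 0 ≤ p ω) {A B : Type} [Fintype A] [Fintype B]
    (X : Ω → A) (Y : Ω → B) (u : Set Ω) :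
    0 ≤ ∑ ab : A × B, mass p (X ⁻¹' {ab.1} ∩ Y ⁻¹' {ab.2} ∩ u) *
      condPMI p (X ⁻¹' {ab.1}) (Y ⁻¹' {ab.2}) u := by
  have hsum_f : ∑ ab : A × B, mass p (X ⁻¹' {ab.1} ∩ Y ⁻¹' {ab.2} ∩ u) = mass p u := by
    rw [Fintype.sum_prod_type, sum_comm]
    simp only [Set.inter_assoc, sum_mass_preimage_inter]
  have hsum_g :
      ∑ ab : A × B, mass p (X ⁻¹' {ab.1} ∩ u) * mass p (Y ⁻¹' {ab.2} ∩ u) / mass p u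
        = mass p u := by
    rw [← sum_div, Fintype.sum_prod_type]
    dsimp only
    rw [← Fintype.sum_mul_sum, sum_mass_preimage_inter, sum_mass_preimage_inter,
      mul_self_div_self]
  have key := sum_mul_log_div_nonneg (fun _ => mass_nonneg hp _)
    (fun _ => div_nonneg (mul_nonneg (mass_nonneg hp _) (mass_nonneg hp _)) (mass_nonneg hp _))
    (fun ab hab => ?_) (hsum_g.trans hsum_f.symm).le
  · simpa only [condPMI, div_div_eq_mul_div] using key
  have of_le_null : ∀ r, X ⁻¹' {ab.1} ∩ Y ⁻¹' {ab.2} ∩ u ⊆ r → mass p r = 0 →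
      mass p (X ⁻¹' {ab.1} ∩ Y ⁻¹' {ab.2} ∩ u) = 0 := fun r hr h0 =>
    le_antisymm (h0 ▸ mass_mono hp hr) (mass_nonneg hp _)
  rcases div_eq_zero_iff.1 hab with hab | hu
  · rcases mul_eq_zero.1 hab with hx | hy
    · exact of_le_null (X ⁻¹' {ab.1} ∩ u) (fun ω h => ⟨h.1.1, h.2⟩) hx
    · exact of_le_null (Y ⁻¹' {ab.2} ∩ u) (fun ω h => ⟨h.1.2, h.2⟩) hy
  · exact of_le_null _ Set.inter_subset_right hu

end PointwiseInformation

section CondMI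

variable {Ω A B C D : Type} [Fintype Ω] [Fintype A] [Fintype B] [Fintype C] [Fintype D]
  [DecidableEq A] [DecidableEq B] [DecidableEq C] [DecidableEq D] (p : Ω → ℝ)

lemma condMI_eq_sum_mass (X : Ω → A) (Y : Ω → B) (Z : Ω → C) :
    condMI p X Y Z = ∑ a, ∑ b, ∑ c, mass p (X ⁻¹' {a} ∩ Y ⁻¹' {b} ∩ Z ⁻¹' {c}) *
      condPMI p (X ⁻¹' {a}) (Y ⁻¹' {b}) (Z ⁻¹' {c}) := by
  have hmass : ∀ (P : Ω → Prop) [DecidablePred P],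
      (∑ ω, if P ω then p ω else 0) = mass p {ω | P ω} := fun P _ => by
    simp only [mass, Set.indicator_apply, Set.mem_ofPred_eq]
  simp only [condMI, condPMI, hmass, Set.inter_assoc]
  rfl

lemma condMI_eq_sum_condPMI (X : Ω → A) (Y : Ω → B) (Z : Ω → C) :
    condMI p X Y Z = ∑ ω, p ω *
      condPMI p (X ⁻¹' {X ω}) (Y ⁻¹' {Y ω}) (Z ⁻¹' {Z ω}) := by
  rw [condMI_eq_sum_mass, ← sum_mass_preimage_mul p (fun ω => (X ω, Y ω, Z ω))
    (fun abc => condPMI p (X ⁻¹' {abc.1}) (Y ⁻¹' {abc.2.1}) (Z ⁻¹' {abc.2.2}))]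
  simp only [Fintype.sum_prod_type, preimage_pair_singleton, Set.inter_assoc]

lemma condMI_congr {A' B' C' : Type} [Fintype A'] [Fintype B'] [Fintype C'] [DecidableEq A']
    [DecidableEq B'] [DecidableEq C'] {X : Ω → A} {Y : Ω → B} {Z : Ω → C} {X' : Ω → A'}
    {Y' : Ω → B'} {Z' : Ω → C'} (hX : ∀ ω, X ⁻¹' {X ω} = X' ⁻¹' {X' ω})
    (hY : ∀ ω, Y ⁻¹' {Y ω} = Y' ⁻¹' {Y' ω}) (hZ : ∀ ω, Z ⁻¹' {Z ω} = Z' ⁻¹' {Z' ω}) :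
    condMI p X Y Z = condMI p X' Y' Z' := by
  simp only [condMI_eq_sum_condPMI, hX, hY, hZ]

lemma condMI_comm (X : Ω → A) (Y : Ω → B) (Z : Ω → C) :
    condMI p X Y Z = condMI p Y X Z := by
  simp only [condMI_eq_sum_condPMI, condPMI_comm p (X ⁻¹' _)]

lemma condMI_pair_comm (X : Ω → A) (Y : Ω → B) (Z : Ω → C) (W : Ω → D) :
    condMI p X (fun ω => (Y ω, Z ω)) W = condMI p X (fun ω => (Z ω, Y ω)) W :=
  condMI_congr p (fun _ => rfl)
    (fun ω => by simp only [preimage_pair_singleton, Set.inter_comm]) (fun _ => rfl)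

lemma condMI_cond_pair_comm (X : Ω → A) (Y : Ω → B) (Z : Ω → C) (W : Ω → D) :
    condMI p X Y (fun ω => (Z ω, W ω)) = condMI p X Y (fun ω => (W ω, Z ω)) :=
  condMI_congr p (fun _ => rfl) (fun _ => rfl)
    (fun ω => by simp only [preimage_pair_singleton, Set.inter_comm])

variable {p}

lemma condMI_nonneg (hp : ∀ ω, 0 ≤ p ω) (X : Ω → A) (Y : Ω → B) (Z : Ω → C) :
    0 ≤ condMI p X Y Z := by
  rw [condMI_eq_sum_mass, ← Fintype.sum_prod_type', sum_comm]
  exact sum_nonneg fun c _ => sum_mass_mul_condPMI_nonneg hp X Y _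

lemma condMI_pair_eq_add (hp : ∀ ω, 0 ≤ p ω) (X : Ω → A) (Y : Ω → B) (Z : Ω → C)
    (W : Ω → D) : condMI p X (fun ω => (Y ω, Z ω)) W =
      condMI p X Z W + condMI p X Y (fun ω => (Z ω, W ω)) := by
  simp only [condMI_eq_sum_condPMI, preimage_pair_singleton, ← sum_add_distrib, ← mul_add]
  refine sum_congr rfl fun ω _ => ?_
  rcases (hp ω).eq_or_lt with hpω | hpω
  · simp [← hpω]
  · rw [condPMI_inter_mid hp (ω := ω) (by simp) hpω]

lemma condMI_pair_eq_zero_iff (hp : ∀ ω, 0 ≤ p ω) (X : Ω → A) (Y : Ω → B) (Z : Ω → C)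
    (W : Ω → D) : condMI p X (fun ω => (Y ω, Z ω)) W = 0 ↔
      condMI p X Z W = 0 ∧ condMI p X Y (fun ω => (Z ω, W ω)) = 0 := by
  rw [condMI_pair_eq_add hp]
  exact add_eq_zero_iff_of_nonneg (condMI_nonneg hp _ _ _) (condMI_nonneg hp _ _ _)

lemma mi_pair_eq_add (hp : ∀ ω, 0 ≤ p ω) (X : Ω → A) (Y : Ω → B) (Z : Ω → C) :
    mi p X (fun ω => (Y ω, Z ω)) = mi p X Z + condMI p X Y Z := by
  rw [mi, mi, condMI_pair_eq_add hp]
  congr 1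
  exact condMI_congr p (fun _ => rfl) (fun _ => rfl) (fun _ => by ext; simp)

lemma condMI_cond_pair_eq_zero (hp : ∀ ω, 0 ≤ p ω) {X : Ω → A} {Y : Ω → B} {Z : Ω → C}
    {W : Ω → D} (hXY : condMI p X Y Z = 0) (hXW : condMI p X W (fun ω => (Y ω, Z ω)) = 0) :
    condMI p X Y (fun ω => (W ω, Z ω)) = 0 := by
  have hpair := (condMI_pair_eq_zero_iff hp X W Y Z).2 ⟨hXY, hXW⟩
  rw [condMI_pair_comm] at hpair
  exact ((condMI_pair_eq_zero_iff hp X Y W Z).1 hpair).2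

lemma mi_eq_of_condMI_eq_zero (hp : ∀ ω, 0 ≤ p ω) {X : Ω → A} {Y : Ω → B} {Z : Ω → C}
    (hY : condMI p X Y Z = 0) (hZ : condMI p X Z Y = 0) : mi p X Y = mi p X Z := by
  have hYZ := mi_pair_eq_add hp X Y Z
  have hZY := mi_pair_eq_add hp X Z Y
  rw [mi, condMI_pair_comm, ← mi] at hYZ
  linarith

end CondMI

theorem stmt3_general {Ω A B C D : Type} [Fintype Ω] [Fintype A] [Fintype B] [Fintype C] [Fintype D]
    [DecidableEq A] [DecidableEq B] [DecidableEq C] [DecidableEq D]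
    (p : Ω → ℝ) (hp : ∀ ω, 0 ≤ p ω)
    (v1 : Ω → A) (v2 : Ω → B) (y : Ω → C) (z1 : Ω → D)
    (hred1 : condMI p y v1 v2 = 0)
    (hred2 : condMI p y v2 v1 = 0)
    (hrep : condMI p y z1 (fun ω => (v1 ω, v2 ω)) = 0)
    (hsuff : condMI p v1 v2 z1 = 0) :
    mi p y z1 = mi p y (fun ω => (v1 ω, v2 ω)) := by
  have hy_v1 : condMI p y v1 (fun ω => (z1 ω, v2 ω)) = 0 :=
    condMI_cond_pair_eq_zero hp hred1 hrep
  have hy_v2 : condMI p y v2 (fun ω => (z1 ω, v1 ω)) = 0 :=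
    condMI_cond_pair_eq_zero hp hred2 (by rwa [condMI_cond_pair_comm] at hrep)
  have hv1_y : condMI p v1 y z1 = 0 := by
    have hpair := (condMI_pair_eq_zero_iff hp v1 y v2 z1).2
      ⟨hsuff, by rwa [condMI_comm, condMI_cond_pair_comm]⟩
    rw [condMI_pair_comm] at hpair
    exact ((condMI_pair_eq_zero_iff hp v1 v2 y z1).1 hpair).1
  have hy_v12 : condMI p y (fun ω => (v1 ω, v2 ω)) z1 = 0 := by
    rw [condMI_pair_comm]
    exact (condMI_pair_eq_zero_iff hp y v2 v1 z1).2
      ⟨by rwa [condMI_comm], by rwa [condMI_cond_pair_comm]⟩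
  exact mi_eq_of_condMI_eq_zero hp hrep hy_v12

theorem stmt3 {Ω A B C D : Type} [Fintype Ω] [Fintype A] [Fintype B] [Fintype C] [Fintype D]
    [DecidableEq A] [DecidableEq B] [DecidableEq C] [DecidableEq D]
    (p : Ω → ℝ) (hp : ∀ ω, 0 ≤ p ω) (hp1 : ∑ ω : Ω, p ω = 1)
    (v1 : Ω → A) (v2 : Ω → B) (y : Ω → C) (z1 : Ω → D)
    (hred1 : condMI p y v1 v2 = 0)
    (hred2 : condMI p y v2 v1 = 0)
    (hrep : condMI p y z1 (fun ω => (v1 ω, v2 ω)) = 0)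
    (hsuff : condMI p v1 v2 z1 = 0) :
    mi p y z1 = mi p y (fun ω => (v1 ω, v2 ω)) :=
  stmt3_general p hp v1 v2 y z1 hred1 hred2 hrep hsuff
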